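/- In any Moufang loop L, the operation C(x,y,z) = (y * x⁻¹) * z satisfies C(a, b, C(b,c,d)) = C(a, C(a,b,c), C(C(a,b,c), c, d)) for all a, b, c, d ∈ L. -/
import Mathlib


/-- A Moufang loop: a quasigroup with identity satisfying the Moufang identity
`z * (x * (z * y)) = ((z * x) * z) * y`. -/
structure MoufangLoop (α : Type*) where
  mul : α → α → α
  one : α
  ldiv : α → α → α
  rdiv : α → α → α
  one_mul : ∀ a, mul one a = a
  mul_one : ∀ a, mul a one = a
  ldiv_mul : ∀ a b, ldiv a (mul a b) = b
  mul_ldiv : ∀ a b, mul a (ldiv a b) = b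
  mul_rdiv : ∀ a b, mul (rdiv a b) b = a
  rdiv_mul : ∀ a b, rdiv (mul a b) b = a
  moufang : ∀ x y z, mul z (mul x (mul z y)) = mul (mul (mul z x) z) y

/-- The (two-sided) inverse in a Moufang loop: `a⁻¹ = a \ 1`. -/
def MoufangLoop.inv {α : Type*} (L : MoufangLoop α) (a : α) : α := L.ldiv a L.one

/-- The ternary operation `C(x,y,z) = (y * x⁻¹) * z`. -/
def MoufangLoop.C {α : Type*} (L : MoufangLoop α) (x y z : α) : α :=
  L.mul (L.mul y (L.inv x)) z

namespace MoufangLoop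

variable {α : Type*} (L : MoufangLoop α)

lemma mul_inv (a : α) : L.mul a (L.inv a) = L.one := L.mul_ldiv a L.one

/-- Left inverse property. -/
lemma inv_mul_mul (x y : α) : L.mul (L.inv x) (L.mul x y) = y := by
  have h := L.moufang (L.inv x) y x
  rw [L.mul_inv, L.one_mul] at h
  have := congrArg (L.ldiv x) h
  rwa [L.ldiv_mul, L.ldiv_mul] at this

lemma inv_mul (x : α) : L.mul (L.inv x) x = L.one := by
  have h := L.inv_mul_mul x L.one
  rwa [L.mul_one] at h

lemma inv_inv (x : α) : L.inv (L.inv x) = x := by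
  have h := L.inv_mul_mul (L.inv x) x
  rwa [L.inv_mul, L.mul_one] at h

/-- `x * (x⁻¹ * y) = y`. -/
lemma mul_inv_mul (x y : α) : L.mul x (L.mul (L.inv x) y) = y := by
  have h := L.inv_mul_mul (L.inv x) y
  rwa [L.inv_inv] at h

/-- Multiplying by the inverse is right division. -/
lemma mul_inv_eq_rdiv (w x : α) : L.mul w (L.inv x) = L.rdiv w x := by
  set v := L.ldiv x (L.rdiv w x) with hv
  have hxv : L.mul x v = L.rdiv w x := L.mul_ldiv x (L.rdiv w x)
  have hw : L.mul (L.mul x v) x = w := by rw [hxv]; exact L.mul_rdiv w x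
  have h := L.moufang v (L.inv x) x
  rw [L.mul_inv, L.mul_one, hw] at h
  rw [← h, hxv]

/-- Right inverse property, form `(y * x⁻¹) * x = y`. -/
lemma mul_inv_mul_right (y x : α) : L.mul (L.mul y (L.inv x)) x = y := by
  rw [L.mul_inv_eq_rdiv]; exact L.mul_rdiv y x

/-- Right inverse property, form `(y * x) * x⁻¹ = y`. -/
lemma mul_mul_inv (y x : α) : L.mul (L.mul y x) (L.inv x) = y := by
  rw [L.mul_inv_eq_rdiv]; exact L.rdiv_mul y x

/-- The inverse is antiautomorphic: `(x*y)⁻¹ = y⁻¹ * x⁻¹`. -/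
lemma inv_mul_rev (x y : α) : L.inv (L.mul x y) = L.mul (L.inv y) (L.inv x) := by
  set u := L.inv (L.mul x y) with hu
  have h1 : L.mul (L.mul x y) u = L.one := L.mul_inv _
  have h2 : L.mul x y = L.inv u := by
    have := L.mul_mul_inv (L.mul x y) u
    rw [h1, L.one_mul] at this; exact this.symm
  have h3 : y = L.mul (L.inv x) (L.inv u) := by
    rw [← h2]; exact (L.inv_mul_mul x y).symm
  have h4 : L.mul y u = L.inv x := by
    rw [h3, L.mul_inv_mul_right]
  have h5 : u = L.mul (L.inv y) (L.inv x) := by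
    rw [← h4]; exact (L.inv_mul_mul y u).symm
  exact h5

/-- Right cancellation. -/
lemma mul_right_cancel {s t : α} (a : α) (h : L.mul s a = L.mul t a) : s = t := by
  have := congrArg (fun w => L.rdiv w a) h
  simpa [L.rdiv_mul] using this

/-- The key 3-variable identity: `(e * (c*b⁻¹)) * e = (e*c) * a⁻¹` where `e = b*a⁻¹`. -/
lemma key (a b c : α) :
    L.mul (L.mul (L.mul b (L.inv a)) (L.mul c (L.inv b))) (L.mul b (L.inv a))
      = L.mul (L.mul (L.mul b (L.inv a)) c) (L.inv a) := by
  set e := L.mul b (L.inv a) with he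
  apply L.mul_right_cancel a
  rw [L.mul_inv_mul_right]
  have h := L.moufang (L.mul c (L.inv b)) a e
  rw [show L.mul e a = b from L.mul_inv_mul_right b a] at h
  rw [← h, L.mul_inv_mul_right]

end MoufangLoop

theorem moufang_C_distrib2 {α : Type*} (L : MoufangLoop α) (a b c d : α) :
    L.C a b (L.C b c d) = L.C a (L.C a b c) (L.C (L.C a b c) c d) := by
  unfold MoufangLoop.C
  set e := L.mul b (L.inv a) with he
  -- Step A: c * (e*c)⁻¹ = e⁻¹
  have hA : L.mul c (L.inv (L.mul e c)) = L.inv e := by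
    rw [L.inv_mul_rev, L.mul_inv_mul]
  rw [hA]
  -- rewrite d as e * (e⁻¹ * d)
  have hd : d = L.mul e (L.mul (L.inv e) d) := (L.mul_inv_mul e d).symm
  conv_lhs => rw [hd]
  rw [L.moufang (L.mul c (L.inv b)) (L.mul (L.inv e) d) e, L.key a b c]
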